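/- arXiv:1912.07438 — 2 statements merged into one kernel-verified Lean document; each statement's English description precedes it below -/
import Mathlib

section
/- For the single (last) period problem, the policy y*(x, R) given by: order up to min(S, x + B(R)) if x < s and L'(x) < max over y in (x, x + B(R)] of L'(y) − K, and do not order otherwise, is optimal; i.e., it attains max over y in [x, x + B(R)] of L'(y) − K·1{y > x}, where S maximizes the concave function L' and s = min{y : L'(y) ≥ L'(S) − K}. -/
open Classical in
/-- single (last) period optimality of the `(s, C, S)`-type decision:
order up to `min S (x + B R)` if `x < s` and `L' x < sup_{y ∈ (x, x+B R]} L' y − K`,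
otherwise do not order; this attains `max_{y ∈ [x, x + B R]} (L' y − K·1{y > x})`. -/
theorem stmt3
    (L' : ℝ → ℝ) (hcont : ContinuousOn L' (Set.Ici 0))
    (hconc : ConcaveOn ℝ (Set.Ici (0 : ℝ)) L')
    (S : ℝ) (hS : S ∈ Set.Ici (0 : ℝ))
    (hmax : ∀ y ∈ Set.Ici (0 : ℝ), L' y ≤ L' S)
    (K c W R x : ℝ) (hK : 0 < K) (hc : 0 < c) (hW : 0 ≤ W) (hx : 0 ≤ x)
    (B : ℝ) (hB : B = max 0 ((R - K - W) / c))
    (s : ℝ) (hs : s = sInf {y ∈ Set.Icc 0 S | L' S - K ≤ L' y})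
    (ystar : ℝ)
    (hystar : ystar =
      if x < s ∧ L' x < sSup (L' '' Set.Ioc x (x + B)) - K then min S (x + B) else x) :
    ystar ∈ Set.Icc x (x + B) ∧
    ∀ y ∈ Set.Icc x (x + B),
      L' y - (if x < y then K else 0) ≤ L' ystar - (if x < ystar then K else 0) := by
  have hB0 : 0 ≤ B := hB ▸ le_max_left 0 _
  have hSnn : (0:ℝ) ≤ S := hS
  -- monotonicity on [0, S]
  have incr : ∀ a b : ℝ, 0 ≤ a → a ≤ b → b ≤ S → L' a ≤ L' b := by
    intro a b ha hab hbS
    have hseg : b ∈ segment ℝ a S := by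
      rw [segment_eq_Icc (le_trans hab hbS)]; exact ⟨hab, hbS⟩
    have := hconc.ge_on_segment ha hS hseg
    have haS : L' a ≤ L' S := hmax a ha
    simp [min_eq_left haS] at this
    exact this
  -- anti-monotonicity on [S, ∞)
  have decr : ∀ a b : ℝ, S ≤ a → a ≤ b → L' b ≤ L' a := by
    intro a b hSa hab
    have hseg : a ∈ segment ℝ S b := by
      rw [segment_eq_Icc (le_trans hSa hab)]; exact ⟨hSa, hab⟩
    have := hconc.ge_on_segment hS (le_trans hSnn (le_trans hSa hab)) hseg
    have hbS : L' b ≤ L' S := hmax b (le_trans hSnn (le_trans hSa hab))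
    simp [min_eq_right hbS] at this
    exact this
  -- facts about s
  set A : Set ℝ := {y ∈ Set.Icc 0 S | L' S - K ≤ L' y} with hA
  have hSA : S ∈ A := ⟨⟨hSnn, le_refl S⟩, by linarith⟩
  have hAne : A.Nonempty := ⟨S, hSA⟩
  have hAbdd : BddBelow A := ⟨0, fun y hy => hy.1.1⟩
  have hAclosed : IsClosed A := by
    have heq : A = Set.Icc 0 S ∩ L' ⁻¹' Set.Ici (L' S - K) := by
      ext y; simp [hA, Set.mem_sep_iff, Set.mem_inter_iff]
    rw [heq]
    exact (hcont.mono (Set.Icc_subset_Ici_self)).preimage_isClosed_of_isClosed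
      isClosed_Icc isClosed_Ici
  have hsA : s ∈ A := hs ▸ hAclosed.csInf_mem hAne hAbdd
  have hs0 : 0 ≤ s := hsA.1.1
  have hsS : s ≤ S := hsA.1.2
  have hLs : L' S - K ≤ L' s := hsA.2
  -- bddAbove of the image
  have hbdd : BddAbove (L' '' Set.Ioc x (x + B)) := by
    refine ⟨L' S, ?_⟩
    rintro _ ⟨z, hz, rfl⟩
    exact hmax z (le_trans hx hz.1.le)
  by_cases hcond : x < s ∧ L' x < sSup (L' '' Set.Ioc x (x + B)) - K
  · rw [hystar, if_pos hcond]
    have hxS : x < S := lt_of_lt_of_le hcond.1 hsS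
    by_cases hBpos : 0 < B
    · have hxlt : x < min S (x + B) := lt_min hxS (by linarith)
      have hmem : min S (x + B) ∈ Set.Icc x (x + B) := ⟨hxlt.le, min_le_right _ _⟩
      have hmaxy : ∀ y ∈ Set.Icc x (x + B), L' y ≤ L' (min S (x + B)) := by
        intro y hy
        rcases le_total (x + B) S with h | h
        · rw [min_eq_right h]
          exact incr y (x + B) (le_trans hx hy.1) hy.2 h
        · rw [min_eq_left h]
          exact hmax y (le_trans hx hy.1)
      have hne : (L' '' Set.Ioc x (x + B)).Nonempty :=
        ⟨L' (x + B), ⟨x + B, ⟨by linarith, le_refl _⟩, rfl⟩⟩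
      have hsup_le : sSup (L' '' Set.Ioc x (x + B)) ≤ L' (min S (x + B)) := by
        apply csSup_le hne
        rintro _ ⟨z, hz, rfl⟩
        exact hmaxy z ⟨hz.1.le, hz.2⟩
      have hxlt' : L' x < L' (min S (x + B)) - K := by linarith [hcond.2]
      refine ⟨hmem, ?_⟩
      intro y hy
      rw [if_pos hxlt]
      by_cases hxy : x < y
      · rw [if_pos hxy]; linarith [hmaxy y hy]
      · have hyx : y = x := le_antisymm (not_lt.mp hxy) hy.1
        rw [hyx, if_neg (lt_irrefl x)]
        linarith
    · have hBz : B = 0 := le_antisymm (not_lt.mp hBpos) hB0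
      have hmin : min S (x + B) = x := by rw [hBz, add_zero, min_eq_right hxS.le]
      rw [hmin]
      refine ⟨⟨le_refl x, by linarith⟩, ?_⟩
      intro y hy
      have hyx : y = x := by
        have h2 := hy.2
        rw [hBz, add_zero] at h2
        exact le_antisymm h2 hy.1
      rw [hyx]
  · rw [hystar, if_neg hcond]
    refine ⟨⟨le_refl x, by linarith⟩, ?_⟩
    intro y hy
    rw [if_neg (lt_irrefl x)]
    by_cases hxy : x < y
    · rw [if_pos hxy]
      rcases not_and_or.mp hcond with hns | hnsup
      · -- s ≤ x : never profitable to order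
        have hsx : s ≤ x := not_lt.mp hns
        rcases le_total S x with hSx | hxS
        · have := decr x y hSx hy.1
          linarith
        · have h1 : L' s ≤ L' x := incr s x hs0 hsx hxS
          have h2 : L' y ≤ L' S := hmax y (le_trans hx hy.1)
          linarith
      · have hsup : sSup (L' '' Set.Ioc x (x + B)) - K ≤ L' x := not_lt.mp hnsup
        have hyle : L' y ≤ sSup (L' '' Set.Ioc x (x + B)) :=
          le_csSup hbdd ⟨y, ⟨hxy, hy.2⟩, rfl⟩
        linarith
    · have hyx : y = x := le_antisymm (not_lt.mp hxy) hy.1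
      rw [hyx, if_neg (lt_irrefl x)]
end

section
/- For a concave function g with maximizer S, fixed cost K > 0, and the threshold s = inf{y ∈ [0, S] : g(y) ≥ g(S) − K}: if x < s then g(S) − K > g(x), i.e., ordering up to S (paying fixed cost K) strictly improves on not ordering; if s ≤ x ≤ S then g(y) − K ≤ g(x) for all y ∈ [x, S]. -/
/-- for `g` continuous concave with maximizer `S`, `K > 0`, and
`s = inf {y ∈ [0, S] : g y ≥ g S − K}`: if `x < s` then `g S − K > g x` (ordering up to
`S` strictly improves on not ordering), while if `s ≤ x ≤ S` then `g y − K ≤ g x` for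
all `y ∈ [x, S]`. -/
theorem stmt13
    (g : ℝ → ℝ) (hcont : ContinuousOn g (Set.Ici 0))
    (hconc : ConcaveOn ℝ (Set.Ici (0 : ℝ)) g)
    (S : ℝ) (hS : S ∈ Set.Ici (0 : ℝ)) (hmax : ∀ y ∈ Set.Ici (0 : ℝ), g y ≤ g S)
    (K : ℝ) (hK : 0 < K)
    (s : ℝ) (hs : s = sInf {y ∈ Set.Icc 0 S | g S - K ≤ g y}) :
    (∀ x, 0 ≤ x → x < s → g x < g S - K) ∧
    (∀ x, s ≤ x → x ≤ S → ∀ y ∈ Set.Icc x S, g y - K ≤ g x) := by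
  set T : Set ℝ := {y ∈ Set.Icc 0 S | g S - K ≤ g y} with hT
  have hSmem : S ∈ T := ⟨⟨hS, le_rfl⟩, by linarith⟩
  have hne : T.Nonempty := ⟨S, hSmem⟩
  have hbdd : BddBelow T := ⟨0, fun y hy => hy.1.1⟩
  have hclosed : IsClosed T := by
    have : T = Set.Icc 0 S ∩ g ⁻¹' Set.Ici (g S - K) := by
      ext y; simp [hT, Set.mem_Icc, and_assoc]
    rw [this]
    exact (hcont.mono (Set.Icc_subset_Ici_self)).preimage_isClosed_of_isClosed
      isClosed_Icc isClosed_Ici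
  have hsmem : s ∈ T := hs ▸ hclosed.csInf_mem hne hbdd
  have hsS : s ≤ S := hsmem.1.2
  have hs0 : 0 ≤ s := hsmem.1.1
  constructor
  · intro x hx0 hxs
    by_contra h
    push_neg at h
    have : s ≤ x := hs ▸ csInf_le hbdd ⟨⟨hx0, hxs.le.trans hsS⟩, h⟩
    linarith
  · intro x hsx hxS y hy
    have hx0 : 0 ≤ x := hs0.trans hsx
    have hgx : g S - K ≤ g x := by
      have hseg : x ∈ segment ℝ s S := by
        rw [segment_eq_Icc hsS]; exact ⟨hsx, hxS⟩
      have hmin := hconc.ge_on_segment (x := s) (y := S) hs0 hS hseg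
      calc g S - K ≤ min (g s) (g S) := le_min hsmem.2 (by linarith)
        _ ≤ g x := hmin
    have : g y ≤ g S := hmax y (hx0.trans hy.1)
    linarith
end
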